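/- Let p > 2 and M > 0, and let γ ∈ W^{2,p}(ℝ/ℤ, ℝⁿ) be a closed curve parametrised by arc-length with ‖γ'‖_{W^{1,p}} ≤ M. Then there exists ε = ε(p, M) > 0 such that the mollified curve γ_ε has nowhere-vanishing derivative and the unit tangent τ = γ'_ε/|γ'_ε| satisfies ‖τ − γ'‖_{L^∞} ≤ 1/4. -/

import Mathlib

open MeasureTheory Real Filter Set
open scoped ENNReal

noncomputable section

/-- Euclidean space `ℝⁿ`. -/
abbrev En (n : ℕ) := EuclideanSpace ℝ (Fin n)

/-- The real inner product on `ℝⁿ`. -/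
def rinner {n : ℕ} (x y : En n) : ℝ := inner ℝ x y

/-- Orthogonal projection of `w` onto the line spanned by `v`: `P^T_v w`. -/
def projTan {n : ℕ} (v w : En n) : En n := (rinner w v / ‖v‖ ^ 2) • v

/-- Orthogonal projection of `w` onto the orthogonal complement of `v`: `P^⊥_v w`. -/
def projPerp {n : ℕ} (v w : En n) : En n := w - projTan v w

/-- The sup (`L^∞`) norm of a function. -/
def supNorm {n : ℕ} (f : ℝ → En n) : ℝ := ⨆ x : ℝ, ‖f x‖

/-- The `C^{1/2}`-Hölder seminorm of a function. -/
def holderHalfNorm {n : ℕ} (f : ℝ → En n) : ℝ :=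
  ⨆ q : ℝ × ℝ, if q.1 = q.2 then 0 else ‖f q.1 - f q.2‖ / |q.1 - q.2| ^ ((1 : ℝ) / 2)

/-- Mollification `γ * η_ε` with the rescaled mollifier `η_ε(y) = ε⁻¹ η(y/ε)`. -/
def mollify {n : ℕ} (η : ℝ → ℝ) (ε : ℝ) (γ : ℝ → En n) (x : ℝ) : En n :=
  ∫ y : ℝ, (ε⁻¹ * η (y / ε)) • γ (x - y)

/-- `η` is a mollifier. -/
structure IsMollifier (η : ℝ → ℝ) : Prop where
  smooth : ContDiff ℝ (⊤ : ℕ∞) η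
  nonneg : ∀ x, 0 ≤ η x
  vanish : ∀ x, 1 ≤ |x| → η x = 0
  integral_one : (∫ x : ℝ, η x) = 1

/-- `f` is a closed curve of class `W^{2,p}(ℝ/Lℤ, ℝⁿ)` with (weak) second derivative `f₂`:
`f` is `C¹`, `L`-periodic, `deriv f` is an indefinite integral of `f₂`, and `f₂ ∈ L^p`. -/
structure IsW2p {n : ℕ} (p L : ℝ) (f f₂ : ℝ → En n) : Prop where
  periodic : Function.Periodic f L
  contDiff : ContDiff ℝ 1 f
  ftc : ∀ x, deriv f x = deriv f 0 + ∫ y in (0:ℝ)..x, f₂ y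
  memLp : MemLp f₂ (ENNReal.ofReal p) (volume.restrict (Set.Ioc (0:ℝ) L))

/-- `f` is a closed curve of class `W^{3,p}(ℝ/Lℤ, ℝⁿ)` with second derivative `f₂` and third
derivative `f₃`. -/
structure IsW3p {n : ℕ} (p L : ℝ) (f f₂ f₃ : ℝ → En n) : Prop where
  base : IsW2p p L f f₂
  ftc2 : ∀ x, f₂ x = f₂ 0 + ∫ y in (0:ℝ)..x, f₃ y
  memLp : MemLp f₃ (ENNReal.ofReal p) (volume.restrict (Set.Ioc (0:ℝ) L))

/-- A curve is parametrised by arc-length when its derivative has unit length. -/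
def ArcLength {n : ℕ} (f : ℝ → En n) : Prop := ∀ x, ‖deriv f x‖ = 1

/-- `L^p`-norm over one period. -/
def lpNorm {n : ℕ} (p L : ℝ) (f : ℝ → En n) : ℝ :=
  (∫ x in (0:ℝ)..L, ‖f x‖ ^ p) ^ (1 / p)

/-- `L²`-norm over one period. -/
def l2Norm {n : ℕ} (L : ℝ) (f : ℝ → En n) : ℝ :=
  (∫ x in (0:ℝ)..L, ‖f x‖ ^ 2) ^ (1 / (2:ℝ))

/-- `W^{1,p}`-norm of `f` with derivative `f'` over one period. -/
def w1pNormD {n : ℕ} (p L : ℝ) (f f' : ℝ → En n) : ℝ :=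
  (∫ x in (0:ℝ)..L, (‖f x‖ ^ p + ‖f' x‖ ^ p)) ^ (1 / p)

/-- `W^{2,p}`-norm of `f` with derivatives `f'`, `f₂` over one period. -/
def w2pNormD {n : ℕ} (p L : ℝ) (f f' f₂ : ℝ → En n) : ℝ :=
  (∫ x in (0:ℝ)..L, (‖f x‖ ^ p + ‖f' x‖ ^ p + ‖f₂ x‖ ^ p)) ^ (1 / p)

/-- `C¹`-norm. -/
def c1Norm {n : ℕ} (f : ℝ → En n) : ℝ := supNorm f + supNorm (deriv f)

/-- `τ` is a unit quasi-tangent to the curve `g` (relative to the mollifier `η`): it is the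
unit tangent of a mollification `g_ε` of `g` and is `L^∞`-close to `g'`. -/
def IsQuasiTangent {n : ℕ} (η : ℝ → ℝ) (g τ : ℝ → En n) : Prop :=
  ∃ ε > 0, (∀ x, deriv (mollify η ε g) x ≠ 0) ∧
    (∀ x, τ x = ‖deriv (mollify η ε g) x‖⁻¹ • deriv (mollify η ε g) x) ∧
    ∀ x, ‖τ x - deriv g x‖ ≤ 1 / 4

/-- An (orientation preserving) reparametrisation of `ℝ/Lℤ`, written as a lift `σ : ℝ → ℝ`. -/
def IsReparam (L : ℝ) (σ : ℝ → ℝ) : Prop :=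
  ContDiff ℝ 1 σ ∧ (∀ x, σ (x + L) = σ x + L) ∧ ∀ x, 0 < deriv σ x

/-- The curvature vector `κ = P^⊥_{g'}(g₂)/|g'|²` of a curve `g` with second derivative `g₂`. -/
def curvatureD {n : ℕ} (g g₂ : ℝ → En n) (x : ℝ) : En n :=
  (‖deriv g x‖ ^ 2)⁻¹ • projPerp (deriv g x) (g₂ x)

/-- The `p`-elastic energy `(1/p)∫ |κ|^p ds` of a closed curve over one period. -/
def pElasticD {n : ℕ} (p L : ℝ) (g g₂ : ℝ → En n) : ℝ :=
  (1 / p) * ∫ x in (0:ℝ)..L, ‖curvatureD g g₂ x‖ ^ p * ‖deriv g x‖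

/-- The energy `E(γ) = (1/p)∫ |κ|^p ds + λ ∫ ds`. -/
def energyD {n : ℕ} (p lam L : ℝ) (g g₂ : ℝ → En n) : ℝ :=
  pElasticD p L g g₂ + lam * ∫ x in (0:ℝ)..L, ‖deriv g x‖

/-- The unit tangent `∂_s g = g'/|g'|`. -/
def unitTangentD {n : ℕ} (g : ℝ → En n) (x : ℝ) : En n := ‖deriv g x‖⁻¹ • deriv g x

/-- The arc-length derivative `∂_s ψ = ψ'/|g'|` of `ψ` (with data `ψ'`) along the curve `g`. -/
def arcDeriv {n : ℕ} (g ψ' : ℝ → En n) (x : ℝ) : En n := ‖deriv g x‖⁻¹ • ψ' x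

/-- The second arc-length derivative
`∂²_s ψ = ψ''/|g'|² − ⟨g'/|g'|, g''⟩ ψ' /|g'|³` of `ψ` along the curve `g`. -/
def arcDeriv2 {n : ℕ} (g g₂ ψ' ψ₂ : ℝ → En n) (x : ℝ) : En n :=
  (‖deriv g x‖ ^ 2)⁻¹ • ψ₂ x - (rinner (deriv g x) (g₂ x) / ‖deriv g x‖ ^ 4) • ψ' x

/-- The first variation of the curvature,
`δ_ψ κ = (∂²_s ψ)^⊥ − ⟨κ, ∂_s ψ⟩ ∂_s g − 2 ⟨∂_s g, ∂_s ψ⟩ κ`. -/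
def deltaKappa {n : ℕ} (g g₂ ψ' ψ₂ : ℝ → En n) (x : ℝ) : En n :=
  projPerp (deriv g x) (arcDeriv2 g g₂ ψ' ψ₂ x)
    - rinner (curvatureD g g₂ x) (arcDeriv g ψ' x) • unitTangentD g x
    - (2 * rinner (unitTangentD g x) (arcDeriv g ψ' x)) • curvatureD g g₂ x

/-- The first variation of the `p`-elastic energy,
`δ_ψ E^{(p)}(g) = ∫ |κ|^{p−2} ⟨κ, δ_ψ κ⟩ ds + (1/p)∫ |κ|^p ⟨∂_s g, ∂_s ψ⟩ ds`. -/
def firstVarPElastic {n : ℕ} (p L : ℝ) (g g₂ ψ' ψ₂ : ℝ → En n) : ℝ :=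
  ∫ x in (0:ℝ)..L,
    (‖curvatureD g g₂ x‖ ^ (p - 2) * rinner (curvatureD g g₂ x) (deltaKappa g g₂ ψ' ψ₂ x)
      + (1 / p) * ‖curvatureD g g₂ x‖ ^ p * rinner (unitTangentD g x) (arcDeriv g ψ' x))
      * ‖deriv g x‖

/-- The first variation of the full energy `E = E^{(p)} + λ Length`. -/
def firstVarEnergy {n : ℕ} (p lam L : ℝ) (g g₂ ψ' ψ₂ : ℝ → En n) : ℝ :=
  firstVarPElastic p L g g₂ ψ' ψ₂
    + lam * ∫ x in (0:ℝ)..L, rinner (unitTangentD g x) (arcDeriv g ψ' x) * ‖deriv g x‖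

/-- The tubular neighbourhood map `H_{x₀}(x,v) = γ(x) + P^⊥_{τ(x)} v`. -/
def tubeMap {n : ℕ} (γ τ : ℝ → En n) (z : ℝ × En n) : En n := γ z.1 + projPerp (τ z.1) z.2

/-- The domain `B_δ(x₀) × B_δ(0) ⊆ (ℝ/ℤ) × 𝒩_{x₀}` of the tubular neighbourhood map, where
`𝒩_{x₀} = {v : P^T_{τ(x₀)} v = 0}` is the approximate normal space. -/
def tubeDom {n : ℕ} (τ : ℝ → En n) (x₀ δ : ℝ) : Set (ℝ × En n) :=
  {z | |z.1 - x₀| < δ ∧ ‖z.2‖ < δ ∧ rinner z.2 (τ x₀) = 0}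

/-- A perturbation of class `W^{2,p}(ℝ/Lℤ, ℝⁿ)`, bundled with its second derivative. -/
structure W2pPert (n : ℕ) (p L : ℝ) where
  f : ℝ → En n
  f₂ : ℝ → En n
  isW2p : IsW2p p L f f₂

/-- Membership in the admissible class
`𝒱(μ,W) = {φ ∈ (W^{2,p})^⊥_τ : ‖φ‖_{L^∞} < 3μ, ‖φ'‖_{L^∞} < 3W}`. -/
def inV {n : ℕ} {p L : ℝ} (τ : ℝ → En n) (μ W : ℝ) (φ : W2pPert n p L) : Prop :=
  (∀ x, rinner (φ.f x) (τ x) = 0) ∧ supNorm φ.f < 3 * μ ∧ supNorm (deriv φ.f) < 3 * W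

/-- The minimising movement functional
`ℱ_j(φ) = E(γ̃+φ) + (1/2h) ∫ |P^⊥_{γ_{t_j}'}(γ̃+φ−γ_{t_j})|² |γ_{t_j}'| dx`,
where `γ_{t_j} = γ̃ + φprev`. -/
def mmFunctional {n : ℕ} (p lam L h : ℝ) (γt : ℝ → En n) (φprev φ : W2pPert n p L) : ℝ :=
  energyD p lam L (fun x => γt x + φ.f x) (fun x => deriv (deriv γt) x + φ.f₂ x)
    + (1 / (2 * h)) * ∫ x in (0:ℝ)..L,
        ‖projPerp (deriv γt x + deriv φprev.f x) (φ.f x - φprev.f x)‖ ^ 2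
          * ‖deriv γt x + deriv φprev.f x‖

/-- The energy of the discrete-time curve `γ_{t_j} = γ̃ + φ_j`. -/
def discEnergy {n : ℕ} {p L : ℝ} (lam : ℝ) (γt : ℝ → En n) (φj : W2pPert n p L) : ℝ :=
  energyD p lam L (fun x => γt x + φj.f x) (fun x => deriv (deriv γt) x + φj.f₂ x)

/-- `φ : ℕ → W2pPert` is a discrete-time solution of the minimising movement scheme with step
size `h`, initial datum `Φ`, up to time `T`. -/
def IsMMSol {n : ℕ} (p lam L h T : ℝ) (γt τ : ℝ → En n) (μ W : ℝ)
    (Φ : W2pPert n p L) (φ : ℕ → W2pPert n p L) : Prop :=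
  φ 0 = Φ ∧ ∀ j : ℕ, ((j : ℝ) + 1) * h < T →
    inV τ μ W (φ (j + 1)) ∧
      ∀ ψ : W2pPert n p L, inV τ μ W ψ →
        mmFunctional p lam L h γt (φ j) (φ (j + 1)) ≤ mmFunctional p lam L h γt (φ j) ψ

/-- The piecewise linear interpolation in time `φ^{(h)}` of a discrete family. -/
def interpPert {n : ℕ} {p L : ℝ} (h : ℝ) (φ : ℕ → W2pPert n p L) (t s : ℝ) : En n :=
  (φ ⌊t / h⌋₊).f s
    + ((t - (⌊t / h⌋₊ : ℝ) * h) / h) • ((φ (⌊t / h⌋₊ + 1)).f s - (φ ⌊t / h⌋₊).f s)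

/-- The piecewise linear interpolation of the second derivatives of a discrete family. -/
def interpPert2 {n : ℕ} {p L : ℝ} (h : ℝ) (φ : ℕ → W2pPert n p L) (t s : ℝ) : En n :=
  (φ ⌊t / h⌋₊).f₂ s
    + ((t - (⌊t / h⌋₊ : ℝ) * h) / h) • ((φ (⌊t / h⌋₊ + 1)).f₂ s - (φ ⌊t / h⌋₊).f₂ s)

/-- The full setting of the minimising movement scheme: an initial arc-length curve `Γ` of
length `L` and energy at most `E₀`, written as an approximate normal graph `Γ ∘ σ = γ̃ + Φ`
over a smooth arc-length curve `γ̃` with unit quasi-tangent `τ`, with `‖Φ‖_{L^∞} ≤ μ` and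
`‖Φ'‖_{L^∞} ≤ W`. -/
structure MMSetup (n : ℕ) (p lam E₀ : ℝ) (η : ℝ → ℝ) where
  L : ℝ
  hL : 0 < L
  Γ : ℝ → En n
  Γ₂ : ℝ → En n
  hΓ : IsW2p p L Γ Γ₂
  hArc : ArcLength Γ
  hE : energyD p lam L Γ Γ₂ ≤ E₀
  gref : ℝ → En n
  hsmooth : ContDiff ℝ (⊤ : ℕ∞) gref
  hper : Function.Periodic gref L
  harc : ArcLength gref
  τ : ℝ → En n
  hτ : IsQuasiTangent η gref τ
  σ : ℝ → ℝ
  hσ : IsReparam L σ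
  Φ : W2pPert n p L
  μ : ℝ
  W : ℝ
  hμ : 0 < μ
  hW : 2 < W
  hdecomp : ∀ x, Γ (σ x) = gref x + Φ.f x
  horth : ∀ x, rinner (Φ.f x) (τ x) = 0
  hΦμ : supNorm Φ.f ≤ μ
  hΦW : supNorm (deriv Φ.f) ≤ W

/-- The `L²`-in-time `W^{1,1}`-in-space norm of a time dependent family. -/
def l2w11 {n : ℕ} (T L : ℝ) (F : ℝ → ℝ → En n) : ℝ :=
  (∫ t in (0:ℝ)..T, (∫ s in (0:ℝ)..L, (‖F t s‖ + ‖deriv (F t) s‖)) ^ 2) ^ (1 / (2:ℝ))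

/-- The `L²`-in-time `L^∞`-in-space norm of a time dependent family. -/
def l2linf {n : ℕ} (T : ℝ) (F : ℝ → ℝ → En n) : ℝ :=
  (∫ t in (0:ℝ)..T, (supNorm (F t)) ^ 2) ^ (1 / (2:ℝ))


/-! The bound `‖γ'‖_{W^{1,p}} ≤ M` and Hölder's inequality make `γ'` uniformly
`(1 - 1/p)`-Hölder with constant `2M` (the factor `2` comes from crossing a period).
Differentiating under the integral, `γ_ε' = γ' * η_ε` is an average of values of `γ'` at distance
less than `ε`, so `|γ_ε' - γ'| ≤ 2M ε^{1-1/p} ≤ 2M ε^{1/2} ≤ 1/8` for `ε = min 1 (16M)⁻²`.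
As `|γ'| = 1`, the vector `γ_ε'` cannot vanish, and normalising it at most doubles its distance
to `γ'`. -/

theorem norm_inv_norm_smul_sub_le {E : Type*} [NormedAddCommGroup E] [NormedSpace ℝ E]
    {u v : E} (hu : ‖u‖ = 1) : ‖‖v‖⁻¹ • v - u‖ ≤ 2 * ‖v - u‖ := by
  have hradial : ‖‖v‖⁻¹ • v - v‖ ≤ ‖v - u‖ := by
    rcases eq_or_ne v 0 with rfl | hv
    · simp
    calc ‖‖v‖⁻¹ • v - v‖ = |1 - ‖v‖| := by
          rw [show ‖v‖⁻¹ • v - v = (‖v‖⁻¹ - 1) • v by rw [sub_smul, one_smul], norm_smul,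
            Real.norm_eq_abs, show ‖v‖⁻¹ - 1 = (1 - ‖v‖) / ‖v‖ by field_simp, abs_div, abs_norm,
            div_mul_cancel₀ _ (norm_ne_zero_iff.mpr hv)]
      _ = |‖u‖ - ‖v‖| := by rw [hu]
      _ ≤ ‖v - u‖ := by rw [norm_sub_rev]; exact abs_norm_sub_norm_le u v
  calc ‖‖v‖⁻¹ • v - u‖ = ‖(‖v‖⁻¹ • v - v) + (v - u)‖ := by rw [sub_add_sub_cancel]
    _ ≤ 2 * ‖v - u‖ := by linarith [norm_add_le (‖v‖⁻¹ • v - v) (v - u)]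

theorem Real.rpow_le_of_le_sq {s t α : ℝ} (hs : 0 ≤ s) (hs1 : s ≤ 1) (ht : 0 ≤ t)
    (hst : s ≤ t ^ 2) (hα : 1 / 2 ≤ α) : s ^ α ≤ t := by
  rcases hs.eq_or_lt with rfl | hs0
  · rw [Real.zero_rpow (by linarith)]; exact ht
  calc s ^ α ≤ s ^ (1 / 2 : ℝ) := Real.rpow_le_rpow_of_exponent_ge hs0 hs1 hα
    _ = √s := (Real.sqrt_eq_rpow s).symm
    _ ≤ t := Real.sqrt_le_iff.mpr ⟨ht, hst⟩

theorem Function.Periodic.deriv {E : Type*} [NormedAddCommGroup E] [NormedSpace ℝ E]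
    {f : ℝ → E} {c : ℝ} (hf : Function.Periodic f c) : Function.Periodic (deriv f) c := by
  intro x
  rw [← deriv_comp_add_const, show (fun y => f (y + c)) = f from funext hf]

theorem Function.Periodic.norm_sub_le_two_mul_rpow {E : Type*} [SeminormedAddCommGroup E]
    {f : ℝ → E} {c C α : ℝ} (hf : Function.Periodic f c) (hc : 0 < c) (hα : 0 ≤ α)
    (hHolder : ∀ a b, 0 ≤ a → a ≤ b → b ≤ c → ‖f b - f a‖ ≤ C * (b - a) ^ α)
    {u v : ℝ} (huv : |v - u| ≤ c) : ‖f v - f u‖ ≤ 2 * (C * |v - u| ^ α) := by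
  wlog hle : u ≤ v generalizing u v
  · rw [norm_sub_rev, abs_sub_comm]
    exact this (by rwa [abs_sub_comm]) (le_of_not_ge hle)
  rw [abs_of_nonneg (sub_nonneg.mpr hle)] at huv ⊢
  -- translate `u` into `[0, c)`; then `v` lands in `[0, 2c)`
  set m : ℤ := ⌊u / c⌋
  have hu0 : 0 ≤ u - m * c := by
    have := Int.floor_le (u / c); rw [le_div_iff₀ hc] at this; linarith
  have hu1 : u - m * c < c := by
    have := Int.lt_floor_add_one (u / c); rw [div_lt_iff₀ hc] at this; linarith
  rw [← hf.sub_int_mul_eq m (x := u), ← hf.sub_int_mul_eq m (x := v)]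
  by_cases hv : v - m * c ≤ c
  · have h := hHolder _ _ hu0 (by linarith) hv
    rw [show v - m * c - (u - m * c) = v - u by ring] at h
    linarith [(norm_nonneg _).trans h]
  · push Not at hv
    have hv' : f (v - m * c - c) = f (v - m * c) := by
      simpa using hf.sub_int_mul_eq 1 (x := v - m * c)
    have h₁ := hHolder 0 (v - m * c - c) le_rfl (by linarith) (by linarith)
    have h₂ := hHolder (u - m * c) c hu0 hu1.le le_rfl
    have hC : 0 ≤ C := nonneg_of_mul_nonneg_left ((norm_nonneg _).trans h₂)
      (Real.rpow_pos_of_pos (by linarith) α)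
    have hmono : ∀ w, 0 ≤ w → w ≤ v - u → C * w ^ α ≤ C * (v - u) ^ α := fun w hw hwle =>
      mul_le_mul_of_nonneg_left (Real.rpow_le_rpow hw hwle hα) hC
    calc ‖f (v - m * c) - f (u - m * c)‖
        = ‖(f (v - m * c - c) - f 0) + (f c - f (u - m * c))‖ := by
          rw [hv', ← hf.eq, sub_add_sub_cancel]
      _ ≤ ‖f (v - m * c - c) - f 0‖ + ‖f c - f (u - m * c)‖ := norm_add_le _ _
      _ ≤ 2 * (C * (v - u) ^ α) := by
          rw [sub_zero] at h₁
          linarith [hmono (v - m * c - c) (by linarith) (by linarith),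
            hmono (c - (u - m * c)) (by linarith) (by linarith)]

theorem norm_intervalIntegral_le_rpow_mul_rpow {E : Type*} [NormedAddCommGroup E]
    [NormedSpace ℝ E] {g : ℝ → E} {p K a b : ℝ} (hp : 1 < p) (hab : a ≤ b)
    (hg : MemLp g (ENNReal.ofReal p) (volume.restrict (Ioc a b)))
    (hK : ∫ x in Ioc a b, ‖g x‖ ^ p ≤ K) :
    ‖∫ x in a..b, g x‖ ≤ K ^ (1 / p) * (b - a) ^ (1 - 1 / p) := by
  have hpq : p.HolderConjugate p.conjExponent := .conjExponent hp
  have hHolder := integral_mul_le_Lp_mul_Lq_of_nonneg hpq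
    (.of_forall fun x => norm_nonneg (g x)) (.of_forall fun _ => zero_le_one) hg.norm
    (memLp_const (1 : ℝ))
  have hone : (∫ _ in Ioc a b, (1 : ℝ) ^ p.conjExponent) ^ (1 / p.conjExponent)
      = (b - a) ^ (1 - 1 / p) := by
    rw [Real.one_rpow, setIntegral_const, smul_eq_mul, mul_one, Real.volume_real_Ioc_of_le hab,
      one_div p.conjExponent, ← hpq.one_sub_inv, one_div]
  simp only [mul_one, hone] at hHolder
  calc ‖∫ x in a..b, g x‖ ≤ ∫ x in a..b, ‖g x‖ :=
        intervalIntegral.norm_integral_le_integral_norm hab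
    _ = ∫ x in Ioc a b, ‖g x‖ := intervalIntegral.integral_of_le hab
    _ ≤ _ := hHolder
    _ ≤ K ^ (1 / p) * (b - a) ^ (1 - 1 / p) := by gcongr

namespace IsW2p

variable {n : ℕ} {p L K : ℝ} {γ γ₂ : ℝ → En n}

theorem integrableOn (hγ : IsW2p p L γ γ₂) (hp : 1 ≤ p) : IntegrableOn γ₂ (Ioc 0 L) :=
  memLp_one_iff_integrable.mp (hγ.memLp.mono_exponent (ENNReal.one_le_ofReal.mpr hp))

theorem integrableOn_norm_rpow (hγ : IsW2p p L γ γ₂) (hp : 0 < p) :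
    IntegrableOn (fun x => ‖γ₂ x‖ ^ p) (Ioc 0 L) := by
  simpa [IntegrableOn, ENNReal.toReal_ofReal hp.le] using
    hγ.memLp.integrable_norm_rpow (ENNReal.ofReal_pos.mpr hp).ne' ENNReal.ofReal_ne_top

theorem deriv_sub_deriv (hγ : IsW2p p L γ γ₂) (hp : 1 ≤ p) {a b : ℝ} (ha : 0 ≤ a)
    (hab : a ≤ b) (hb : b ≤ L) : deriv γ b - deriv γ a = ∫ x in a..b, γ₂ x := by
  have hint : ∀ x, 0 ≤ x → x ≤ L → IntervalIntegrable γ₂ volume 0 x := fun x hx hxL =>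
    (intervalIntegrable_iff_integrableOn_Ioc_of_le hx).mpr
      ((hγ.integrableOn hp).mono_set (Ioc_subset_Ioc le_rfl hxL))
  rw [hγ.ftc a, hγ.ftc b, ← intervalIntegral.integral_interval_sub_left
    (hint b (ha.trans hab) hb) (hint a ha (hab.trans hb))]
  abel

theorem norm_deriv_sub_le_of_mem_Icc (hγ : IsW2p p L γ γ₂) (hp : 1 < p)
    (hK : ∫ x in Ioc 0 L, ‖γ₂ x‖ ^ p ≤ K) {a b : ℝ} (ha : 0 ≤ a) (hab : a ≤ b) (hb : b ≤ L) :
    ‖deriv γ b - deriv γ a‖ ≤ K ^ (1 / p) * (b - a) ^ (1 - 1 / p) := by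
  have hsub : Ioc a b ⊆ Ioc 0 L := Ioc_subset_Ioc ha hb
  rw [hγ.deriv_sub_deriv hp.le ha hab hb]
  refine norm_intervalIntegral_le_rpow_mul_rpow hp hab
    (hγ.memLp.mono_measure (Measure.restrict_mono hsub le_rfl)) (le_trans ?_ hK)
  exact setIntegral_mono_set (hγ.integrableOn_norm_rpow (by linarith))
    (.of_forall fun x => by positivity) hsub.eventuallyLE

theorem norm_deriv_sub_le (hγ : IsW2p p L γ γ₂) (hp : 1 < p) (hL : 0 < L)
    (hK : ∫ x in Ioc 0 L, ‖γ₂ x‖ ^ p ≤ K) {u v : ℝ} (huv : |v - u| ≤ L) :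
    ‖deriv γ v - deriv γ u‖ ≤ 2 * (K ^ (1 / p) * |v - u| ^ (1 - 1 / p)) :=
  hγ.periodic.deriv.norm_sub_le_two_mul_rpow hL
    (sub_nonneg.mpr (div_le_one_of_le₀ hp.le (by linarith)))
    (fun _ _ ha hab hb => hγ.norm_deriv_sub_le_of_mem_Icc hp hK ha hab hb) huv

theorem integral_rpow_le_of_w1pNormD_le (hγ : IsW2p p L γ γ₂) (hp : 0 < p) (hL : 0 ≤ L)
    (harc : ArcLength γ) {M : ℝ} (hM : w1pNormD p L (deriv γ) γ₂ ≤ M) :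
    ∫ x in Ioc 0 L, ‖γ₂ x‖ ^ p ≤ M ^ p - L := by
  have hsplit : ∫ x in (0:ℝ)..L, (‖deriv γ x‖ ^ p + ‖γ₂ x‖ ^ p)
      = L + ∫ x in Ioc 0 L, ‖γ₂ x‖ ^ p := by
    simp only [harc _, Real.one_rpow]
    rw [intervalIntegral.integral_of_le hL, integral_add (integrable_const 1)
      (hγ.integrableOn_norm_rpow hp), setIntegral_const, Real.volume_real_Ioc_of_le hL,
      smul_eq_mul, mul_one, sub_zero]
  have hnonneg : 0 ≤ L + ∫ x in Ioc 0 L, ‖γ₂ x‖ ^ p :=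
    add_nonneg hL (integral_nonneg fun x => by positivity)
  rw [w1pNormD, hsplit] at hM
  have := Real.rpow_le_rpow (by positivity) hM hp.le
  rw [← Real.rpow_mul hnonneg, one_div_mul_cancel hp.ne', Real.rpow_one] at this
  linarith

theorem norm_deriv_sub_le_of_w1pNormD_le (hγ : IsW2p p 1 γ γ₂) (hp : 1 < p)
    (harc : ArcLength γ) {M : ℝ} (hM : 0 ≤ M) (hγM : w1pNormD p 1 (deriv γ) γ₂ ≤ M)
    {u v : ℝ} (huv : |v - u| ≤ 1) :
    ‖deriv γ v - deriv γ u‖ ≤ 2 * (M * |v - u| ^ (1 - 1 / p)) := by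
  have hK := hγ.integral_rpow_le_of_w1pNormD_le (by linarith) zero_le_one harc hγM
  have h := hγ.norm_deriv_sub_le hp one_pos (hK.trans (sub_le_self _ zero_le_one)) huv
  rwa [← Real.rpow_mul hM, mul_one_div_cancel (by linarith), Real.rpow_one] at h

end IsW2p

namespace IsMollifier

variable {η : ℝ → ℝ} {ε : ℝ}

theorem continuous_rescale (hη : IsMollifier η) (ε : ℝ) : Continuous fun y => ε⁻¹ * η (y / ε) :=
  continuous_const.mul (hη.smooth.continuous.comp (continuous_id.div_const ε))

theorem rescale_nonneg (hη : IsMollifier η) (hε : 0 < ε) (y : ℝ) : 0 ≤ ε⁻¹ * η (y / ε) :=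
  mul_nonneg (inv_nonneg.mpr hε.le) (hη.nonneg _)

theorem rescale_eq_zero (hη : IsMollifier η) (hε : 0 < ε) {y : ℝ} (hy : ε ≤ |y|) :
    ε⁻¹ * η (y / ε) = 0 := by
  rw [hη.vanish _ (by rwa [abs_div, abs_of_pos hε, one_le_div hε]), mul_zero]

theorem hasCompactSupport_rescale (hη : IsMollifier η) (hε : 0 < ε) :
    HasCompactSupport fun y => ε⁻¹ * η (y / ε) :=
  HasCompactSupport.intro isCompact_Icc fun _ hy =>
    hη.rescale_eq_zero hε (le_of_lt (by rwa [mem_Icc, ← abs_le, not_le] at hy))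

theorem integrable_rescale (hη : IsMollifier η) (hε : 0 < ε) :
    Integrable fun y => ε⁻¹ * η (y / ε) :=
  (hη.continuous_rescale ε).integrable_of_hasCompactSupport (hη.hasCompactSupport_rescale hε)

theorem integral_rescale (hη : IsMollifier η) (hε : 0 < ε) : ∫ y, ε⁻¹ * η (y / ε) = 1 := by
  rw [integral_const_mul, Measure.integral_comp_div η ε, hη.integral_one, abs_of_pos hε,
    smul_eq_mul, mul_one, inv_mul_cancel₀ hε.ne']

theorem norm_mollify_sub_le (hη : IsMollifier η) (hε : 0 < ε) {n : ℕ} {f : ℝ → En n}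
    (hf : Continuous f) {x δ : ℝ} (hδ : ∀ y, |y| < ε → ‖f (x - y) - f x‖ ≤ δ) :
    ‖mollify η ε f x - f x‖ ≤ δ := by
  have hint : Integrable fun y => (ε⁻¹ * η (y / ε)) • f (x - y) :=
    ((hη.continuous_rescale ε).smul (hf.comp (continuous_sub_left x)))
      |>.integrable_of_hasCompactSupport (hη.hasCompactSupport_rescale hε).smul_right
  have hrepr : mollify η ε f x - f x = ∫ y, (ε⁻¹ * η (y / ε)) • (f (x - y) - f x) := by
    simp only [smul_sub]
    rw [mollify, integral_sub hint ((hη.integrable_rescale hε).smul_const _), integral_smul_const,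
      hη.integral_rescale hε, one_smul]
  have hbound : ∀ y, ‖(ε⁻¹ * η (y / ε)) • (f (x - y) - f x)‖ ≤ (ε⁻¹ * η (y / ε)) * δ := by
    intro y
    rcases lt_or_ge |y| ε with hy | hy
    · rw [norm_smul, Real.norm_of_nonneg (hη.rescale_nonneg hε y)]
      exact mul_le_mul_of_nonneg_left (hδ y hy) (hη.rescale_nonneg hε y)
    · simp [hη.rescale_eq_zero hε hy]
  calc ‖mollify η ε f x - f x‖
      ≤ ∫ y, (ε⁻¹ * η (y / ε)) * δ := by
        rw [hrepr]
        exact norm_integral_le_of_norm_le ((hη.integrable_rescale hε).mul_const δ)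
          (.of_forall hbound)
    _ = δ := by rw [integral_mul_const, hη.integral_rescale hε, one_mul]

theorem hasDerivAt_mollify (hη : IsMollifier η) (hε : 0 < ε) {n : ℕ} {γ : ℝ → En n}
    (hγ : ContDiff ℝ 1 γ) {C : ℝ} (hC : ∀ x, ‖deriv γ x‖ ≤ C) (x : ℝ) :
    HasDerivAt (mollify η ε γ) (mollify η ε (deriv γ) x) x := by
  have hk := hη.continuous_rescale ε
  have hks := hη.hasCompactSupport_rescale hε
  have hconv : ∀ {g : ℝ → En n}, Continuous g → ∀ x',
      Continuous fun y => (ε⁻¹ * η (y / ε)) • g (x' - y) :=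
    fun hg x' => hk.smul (hg.comp (continuous_sub_left x'))
  refine (hasDerivAt_integral_of_dominated_loc_of_deriv_le (x₀ := x)
    (F' := fun x' y => (ε⁻¹ * η (y / ε)) • deriv γ (x' - y))
    (bound := fun y => ‖ε⁻¹ * η (y / ε)‖ * C) (Metric.ball_mem_nhds x zero_lt_one)
    (.of_forall fun x' => (hconv hγ.continuous x').aestronglyMeasurable)
    ((hconv hγ.continuous x).integrable_of_hasCompactSupport hks.smul_right)
    (hconv (hγ.continuous_deriv le_rfl) x).aestronglyMeasurable
    (.of_forall fun y x' _ => ?_) (hk.norm.integrable_of_hasCompactSupport hks.norm |>.mul_const C)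
    (.of_forall fun y x' _ => ?_)).2
  · rw [norm_smul]
    exact mul_le_mul_of_nonneg_left (hC _) (norm_nonneg _)
  · have hγ' : HasDerivAt γ (deriv γ (x' - y)) (x' - y) :=
      (hγ.differentiable one_ne_zero (x' - y)).hasDerivAt
    exact (hγ'.comp_sub_const x' y).const_smul (ε⁻¹ * η (y / ε))

end IsMollifier

/-- Lemma 2.4: existence of the quasi-tangent parameter `ε = ε(p,M)`
such that the unit tangent `τ = γ'_ε/|γ'_ε|` of the mollification satisfies
`‖τ − γ'‖_{L^∞} ≤ 1/4`. -/
theorem stmt_4 {n : ℕ} (p M : ℝ) (hp : 2 < p) (hM : 0 < M)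
    (η : ℝ → ℝ) (hη : IsMollifier η) :
    ∃ ε > (0:ℝ), ∀ (γ γ₂ : ℝ → En n), IsW2p p 1 γ γ₂ → ArcLength γ →
      w1pNormD p 1 (deriv γ) γ₂ ≤ M →
      (∀ x, deriv (mollify η ε γ) x ≠ 0) ∧
      ∀ x, ‖‖deriv (mollify η ε γ) x‖⁻¹ • deriv (mollify η ε γ) x - deriv γ x‖
        ≤ 1 / 4 := by
  set t : ℝ := (16 * M)⁻¹
  have ht : 0 < t := by positivity
  refine ⟨min 1 (t ^ 2), by positivity, fun γ γ₂ hγ harc hγM => ?_⟩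
  set ε := min 1 (t ^ 2)
  have hε : 0 < ε := by positivity
  have hmod : ∀ x y, |y| < ε → ‖deriv γ (x - y) - deriv γ x‖ ≤ 1 / 8 := by
    intro x y hy
    have h := hγ.norm_deriv_sub_le_of_w1pNormD_le (by linarith) harc hM.le hγM (u := x)
      (v := x - y) (by rw [sub_sub_cancel_left, abs_neg]; exact hy.le.trans (min_le_left _ _))
    rw [sub_sub_cancel_left, abs_neg] at h
    have hsmall : |y| ^ (1 - 1 / p) ≤ t := Real.rpow_le_of_le_sq (abs_nonneg y)
      (hy.le.trans (min_le_left _ _)) ht.le (hy.le.trans (min_le_right _ _))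
      (by linarith [one_div_lt_one_div_of_lt two_pos hp])
    calc ‖deriv γ (x - y) - deriv γ x‖ ≤ 2 * (M * t) := h.trans (by gcongr)
      _ = 1 / 8 := by simp only [t]; field_simp; norm_num
  have hclose : ∀ x, ‖deriv (mollify η ε γ) x - deriv γ x‖ ≤ 1 / 8 := fun x => by
    rw [(hη.hasDerivAt_mollify hε hγ.contDiff (fun x => (harc x).le) x).deriv]
    exact hη.norm_mollify_sub_le hε (hγ.contDiff.continuous_deriv le_rfl) (hmod x)
  refine ⟨fun x h0 => ?_, fun x => ?_⟩
  · have h := hclose x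
    rw [h0, zero_sub, norm_neg, harc x] at h
    norm_num at h
  · linarith [norm_inv_norm_smul_sub_le (v := deriv (mollify η ε γ) x) (harc x), hclose x]
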